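/- arXiv:1509.03883 — 3 statements merged into one kernel-verified Lean document; each statement's English description precedes it below -/
import Mathlib

section
/- For any nonzero field elements a1,a2,b1,b2,c1,c2, the determinant of the 3×3 matrix with rows M = (-a1*a2*b1^2*c1, a2^2*b2^2*c2 + a1*a2*b1*b2*c1, -a1^2*b1^2*c1), O = (0, a1^2*b1^2*c1^2 + a2^2*b2^2*c2^2 + a1*a2*b1*b2*c1*c2, a1^2*b1^2*c1*c2), and Q = (a2^2*b1*b2*c2^2, a1^2*b1^2*c1^2 + 2*a1*a2*b1*b2*c1*c2 + a2^2*b2^2*c2^2, a1^2*b1^2*c1*c2 + 2*a1*a2*b1*b2*c2^2) vanishes. -/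
theorem MOQ_collinear_general {K : Type*} [Field K] (a1 a2 b1 b2 c1 c2 : K) :
    Matrix.det !![-a1*a2*b1^2*c1, a2^2*b2^2*c2 + a1*a2*b1*b2*c1, -a1^2*b1^2*c1;
                  0, a1^2*b1^2*c1^2 + a2^2*b2^2*c2^2 + a1*a2*b1*b2*c1*c2, a1^2*b1^2*c1*c2;
                  a2^2*b1*b2*c2^2, a1^2*b1^2*c1^2 + 2*a1*a2*b1*b2*c1*c2 + a2^2*b2^2*c2^2,
                    a1^2*b1^2*c1*c2 + 2*a1*a2*b1*b2*c2^2] = 0 := by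
  rw [Matrix.det_fin_three]
  simp only [Matrix.of_apply, Matrix.cons_val', Matrix.cons_val_zero, Matrix.cons_val_one,
    Matrix.cons_val_two, Matrix.empty_val', Matrix.cons_val_fin_one, Matrix.head_cons,
    Matrix.tail_cons, Matrix.head_fin_const]
  ring

theorem MOQ_collinear {K : Type*} [Field K] (a1 a2 b1 b2 c1 c2 : K)
    (ha1 : a1 ≠ 0) (ha2 : a2 ≠ 0) (hb1 : b1 ≠ 0) (hb2 : b2 ≠ 0)
    (hc1 : c1 ≠ 0) (hc2 : c2 ≠ 0) :
    Matrix.det !![-a1*a2*b1^2*c1, a2^2*b2^2*c2 + a1*a2*b1*b2*c1, -a1^2*b1^2*c1;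
                  0, a1^2*b1^2*c1^2 + a2^2*b2^2*c2^2 + a1*a2*b1*b2*c1*c2, a1^2*b1^2*c1*c2;
                  a2^2*b1*b2*c2^2, a1^2*b1^2*c1^2 + 2*a1*a2*b1*b2*c1*c2 + a2^2*b2^2*c2^2,
                    a1^2*b1^2*c1*c2 + 2*a1*a2*b1*b2*c2^2] = 0 :=
  MOQ_collinear_general a1 a2 b1 b2 c1 c2
end

section
/- Let a1,a2,b1,b2,c1,c2 be nonzero field elements. If a1*b1*c1 + 2*a2*b2*c2 = 0, then the points E = (b1:b2:0), Q = (a2^2*b1*b2*c2^2 : a1^2*b1^2*c1^2 + 2*a1*a2*b1*b2*c1*c2 + a2^2*b2^2*c2^2 : a1^2*b1^2*c1*c2 + 2*a1*a2*b1*b2*c2^2), R = (a1*a2*b1^2*c1 + a2^2*b1*b2*c2 : -a2^2*b2^2*c2 : a1^2*b1^2*c1 + 2*a1*a2*b1*b2*c2), and S = (a1*b1^2*c1 + a2*b1*b2*c2 : -a2*b2^2*c2 : 0) all coincide as points of P^2 (their coordinate vectors are pairwise proportional by nonzero scalars). -/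
/-! With t = a2*b2*c2, condition iii) reads a1*b1*c1 = -2t, so a1*b1*c1 + t = -t and
a1*b1*c1 + 2t = 0. These two factors appear in every coordinate of Q, R and S: the third
coordinates vanish, and the first two are b1 and b2 times a2*c2*t, -a2*t and -t respectively. -/

theorem degeneration_iii_EQRS_coincide_general {K : Type*} [Field K] (a1 a2 b1 b2 c1 c2 : K)
    (ha2 : a2 ≠ 0) (hb2 : b2 ≠ 0)
    (hc2 : c2 ≠ 0)
    (hdeg : a1*b1*c1 + 2*a2*b2*c2 = 0) :
    (∃ q : K, q ≠ 0 ∧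
      (a2^2*b1*b2*c2^2,
       a1^2*b1^2*c1^2 + 2*a1*a2*b1*b2*c1*c2 + a2^2*b2^2*c2^2,
       a1^2*b1^2*c1*c2 + 2*a1*a2*b1*b2*c2^2) = (q*b1, q*b2, q*0)) ∧
    (∃ r : K, r ≠ 0 ∧
      (a1*a2*b1^2*c1 + a2^2*b1*b2*c2, -a2^2*b2^2*c2,
       a1^2*b1^2*c1 + 2*a1*a2*b1*b2*c2) = (r*b1, r*b2, r*0)) ∧
    (∃ s : K, s ≠ 0 ∧
      (a1*b1^2*c1 + a2*b1*b2*c2, -a2*b2^2*c2, (0:K)) = (s*b1, s*b2, s*0)) := by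
  have ht : a2*b2*c2 ≠ 0 := mul_ne_zero (mul_ne_zero ha2 hb2) hc2
  refine ⟨⟨a2*c2*(a2*b2*c2), mul_ne_zero (mul_ne_zero ha2 hc2) ht, ?_⟩,
    ⟨-(a2*(a2*b2*c2)), neg_ne_zero.2 (mul_ne_zero ha2 ht), ?_⟩,
    ⟨-(a2*b2*c2), neg_ne_zero.2 ht, ?_⟩⟩ <;> simp only [Prod.mk.injEq]
  · exact ⟨by ring, by linear_combination (a1*b1*c1) * hdeg,
      by linear_combination (a1*b1*c2) * hdeg⟩
  · exact ⟨by linear_combination (a2*b1) * hdeg, by ring, by linear_combination (a1*b1) * hdeg⟩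
  · exact ⟨by linear_combination b1 * hdeg, by ring, by ring⟩

theorem degeneration_iii_EQRS_coincide {K : Type*} [Field K] (a1 a2 b1 b2 c1 c2 : K)
    (ha1 : a1 ≠ 0) (ha2 : a2 ≠ 0) (hb1 : b1 ≠ 0) (hb2 : b2 ≠ 0)
    (hc1 : c1 ≠ 0) (hc2 : c2 ≠ 0)
    (hdeg : a1*b1*c1 + 2*a2*b2*c2 = 0) :
    (∃ q : K, q ≠ 0 ∧
      (a2^2*b1*b2*c2^2,
       a1^2*b1^2*c1^2 + 2*a1*a2*b1*b2*c1*c2 + a2^2*b2^2*c2^2,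
       a1^2*b1^2*c1*c2 + 2*a1*a2*b1*b2*c2^2) = (q*b1, q*b2, q*0)) ∧
    (∃ r : K, r ≠ 0 ∧
      (a1*a2*b1^2*c1 + a2^2*b1*b2*c2, -a2^2*b2^2*c2,
       a1^2*b1^2*c1 + 2*a1*a2*b1*b2*c2) = (r*b1, r*b2, r*0)) ∧
    (∃ s : K, s ≠ 0 ∧
      (a1*b1^2*c1 + a2*b1*b2*c2, -a2*b2^2*c2, (0:K)) = (s*b1, s*b2, s*0)) :=
  degeneration_iii_EQRS_coincide_general a1 a2 b1 b2 c1 c2 ha2 hb2 hc2 hdeg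
end

section
/- Let a,T be elements of a field of characteristic not 2 with a ≠ 0, a ≠ 1, and a^2 + a - 1 ≠ 0. Set b = ((a-1)*a*T + a^2 + a^4) / (2*(a^2 + a - 1)). Then a^4*b - a^2*b^2 - a^3 + a^2*b - a*b^2 + b^2 = 0 if and only if T^2 = a*(1+a)*(4 + a + a^2). -/
/-
As a quadratic in `b`, the curve equation reads `-(a²+a-1) b² + (a⁴+a²) b - a³ = 0`, whose
discriminant factors as `((a-1)a)² · a(1+a)(4+a+a²)`. The substitution for `b` is exactly the
completion of the square `2(a²+a-1) b - (a⁴+a²) = (a-1) a T`, so the curve equation becomes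
`T² = a(1+a)(4+a+a²)` after cancelling the nonzero factors `4(a²+a-1)` and `((a-1)a)²`.
-/

theorem four_mul_b15_eq_of_complete_square {R : Type*} [CommRing R] {a b T : R}
    (hb : 2*(a^2 + a - 1)*b = (a - 1)*a*T + a^2 + a^4) :
    2*(2*(a^2 + a - 1)) * (a^4*b - a^2*b^2 - a^3 + a^2*b - a*b^2 + b^2) =
      ((a - 1)*a)^2 * (a*(1 + a)*(4 + a + a^2) - T^2) := by
  linear_combination (a^4 + a^2 - (a - 1)*a*T - 2*(a^2 + a - 1)*b) * hb

theorem parameter_curve_substitution {K : Type*} [Field K] (hchar : (2 : K) ≠ 0)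
    (a T : K) (ha0 : a ≠ 0) (ha1 : a ≠ 1) (hd : a^2 + a - 1 ≠ 0) :
    let b := ((a - 1)*a*T + a^2 + a^4) / (2*(a^2 + a - 1))
    (a^4*b - a^2*b^2 - a^3 + a^2*b - a*b^2 + b^2 = 0 ↔
      T^2 = a*(1 + a)*(4 + a + a^2)) := by
  intro b
  have hD : 2*(a^2 + a - 1) ≠ 0 := mul_ne_zero hchar hd
  have hb : 2*(a^2 + a - 1)*b = (a - 1)*a*T + a^2 + a^4 := mul_div_cancel₀ _ hD
  have hc : ((a - 1)*a)^2 ≠ 0 := pow_ne_zero 2 (mul_ne_zero (sub_ne_zero.mpr ha1) ha0)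
  rw [← mul_right_inj' (mul_ne_zero hchar hD), mul_zero, four_mul_b15_eq_of_complete_square hb,
    mul_eq_zero, or_iff_right hc, sub_eq_zero, eq_comm]
end
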